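/- Let G be a (P6, banner)-free graph, H an induced 5-cycle with vertices v1,...,v5 (indices mod 5), and Q a connected vertex set disjoint from and anticomplete to H. Then the set A3+ of vertices with exactly three neighbors on H and at least one neighbor in Q is a clique. -/

import Mathlib

open SimpleGraph

/-- The banner: a 4-cycle 0-1-2-3-0 with a pendant vertex 4 adjacent to 0. -/
def banner : SimpleGraph (Fin 5) :=
  SimpleGraph.fromRel (fun i j => (i, j) ∈ [((0 : Fin 5), 1), (1, 2), (2, 3), (3, 0), (0, 4)])

/-- The house: a 4-cycle 0-1-2-3-0 with a vertex 4 adjacent to 2 and 3. -/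
def house : SimpleGraph (Fin 5) :=
  SimpleGraph.fromRel (fun i j => (i, j) ∈ [((0 : Fin 5), 1), (1, 2), (2, 3), (3, 0), (2, 4), (3, 4)])

/-- The chordless 4-cycle. -/
def cycle4 : SimpleGraph (Fin 4) :=
  SimpleGraph.fromRel (fun i j => j = i + 1)

/-- The chordless 5-cycle. -/
def cycle5 : SimpleGraph (Fin 5) :=
  SimpleGraph.fromRel (fun i j => j = i + 1)

/-- The complete bipartite graph K_{2,3}. -/
def k23 : SimpleGraph (Fin 2 ⊕ Fin 3) := completeBipartiteGraph (Fin 2) (Fin 3)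

/-- `G` contains no induced copy of `F` (an embedding preserves both adjacency
and non-adjacency). -/
def Free {W : Type*} {V : Type*} (F : SimpleGraph W) (G : SimpleGraph V) : Prop :=
  IsEmpty (F ↪g G)

/-- `v 0, ..., v 4` form an induced (chordless) 5-cycle of `G`, edges `v i - v (i+1)`. -/
def IsInducedC5 {V : Type*} (G : SimpleGraph V) (v : Fin 5 → V) : Prop :=
  Function.Injective v ∧ ∀ i j, G.Adj (v i) (v j) ↔ (j = i + 1 ∨ i = j + 1)

/-- `v 0, ..., v 4` form an induced house in `G`: 4-cycle `v 0, v 1, v 2, v 3`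
(standing for v1,v2,v3,v4) plus `v 4` (standing for v5) adjacent to `v 1` and `v 2`. -/
def IsInducedHouse {V : Type*} (G : SimpleGraph V) (v : Fin 5 → V) : Prop :=
  Function.Injective v ∧ ∀ i j, G.Adj (v i) (v j) ↔
    ((i, j) ∈ [((0 : Fin 5), 1), (1, 2), (2, 3), (3, 0), (1, 4), (2, 4)] ∨
     (j, i) ∈ [((0 : Fin 5), 1), (1, 2), (2, 3), (3, 0), (1, 4), (2, 4)])

/-- `Q` is disjoint from and anticomplete to the five vertices `v 0, ..., v 4`. -/
def Anticomplete5 {V : Type*} (G : SimpleGraph V) (Q : Set V) (v : Fin 5 → V) : Prop :=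
  (∀ i, v i ∉ Q) ∧ ∀ q ∈ Q, ∀ i, ¬ G.Adj q (v i)

/-!
A vertex with exactly three neighbours on the 5-cycle `v` sees three consecutive ones
`v (i - 1), v i, v (i + 1)`: the only other pattern, `v i, v (i + 1), v (i + 3)`, spans a banner.
Let `x` and `y` be two nonadjacent such vertices, centred at `i` and `j`, with neighbours `q`, `q'`
in `Q`. If `j = i`, then `x v (i + 1) y v (i - 1)` is a 4-cycle with pendant `v (i + 2)`. If
`j = i + 1` or `j = i + 2` (the other offsets follow by swapping `x` and `y`), a common neighbour
of `x` and `y` among `q`, `q'` closes a 4-cycle through `v (i + 1)` with a pendant on the cycle;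
without one, `q`, `q'` and the arc of the cycle between `x` and `y` contain an induced `P₆`.
-/

section

variable {V W : Type*} {G : SimpleGraph V}

/-- Vertices of `F` with different neighbourhoods have different images automatically, so
injectivity only has to be checked on twins. -/
theorem Free.false_of_adj_iff {F : SimpleGraph W} (h : _root_.Free F G) (f : W → V)
    (hf : ∀ i j, G.Adj (f i) (f j) ↔ F.Adj i j)
    (htwin : ∀ i j, f i = f j → (∀ k, F.Adj i k ↔ F.Adj j k) → i = j) : False :=
  h.false ⟨⟨f, fun i j hij => htwin i j hij fun k => by rw [← hf, ← hf, hij]⟩, hf _ _⟩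

theorem Free.false_of_path6 (h : _root_.Free (pathGraph 6) G) {a b c d e f : V}
    (hab : G.Adj a b) (hbc : G.Adj b c) (hcd : G.Adj c d) (hde : G.Adj d e) (hef : G.Adj e f)
    (hac : ¬G.Adj a c) (had : ¬G.Adj a d) (hae : ¬G.Adj a e) (haf : ¬G.Adj a f)
    (hbd : ¬G.Adj b d) (hbe : ¬G.Adj b e) (hbf : ¬G.Adj b f)
    (hce : ¬G.Adj c e) (hcf : ¬G.Adj c f) (hdf : ¬G.Adj d f) : False := by
  refine h.false_of_adj_iff ![a, b, c, d, e, f] (fun i j => ?_) fun i j _ htwin => ?_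
  · fin_cases i <;> fin_cases j <;> simp [pathGraph_adj, G.adj_comm, *]
  · fin_cases i <;> fin_cases j <;> simp [Fin.forall_fin_succ, pathGraph_adj] at htwin ⊢

theorem Free.false_of_banner (h : _root_.Free banner G) {a b c d e : V}
    (hab : G.Adj a b) (hbc : G.Adj b c) (hcd : G.Adj c d) (hda : G.Adj d a) (hae : G.Adj a e)
    (hac : ¬G.Adj a c) (hbd : ¬G.Adj b d) (hbe : ¬G.Adj b e) (hce : ¬G.Adj c e)
    (hde : ¬G.Adj d e) (hbd' : b ≠ d) : False := by
  refine h.false_of_adj_iff ![a, b, c, d, e] (fun i j => ?_) fun i j hij htwin => ?_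
  · fin_cases i <;> fin_cases j <;> simp [banner, G.adj_comm, hda.symm, *]
  · fin_cases i <;> fin_cases j <;>
      simp [Fin.forall_fin_succ, banner, hbd', hbd'.symm] at hij htwin ⊢

theorem Finset.exists_sub_mem_of_card_eq_three_fin_five :
    ∀ S : Finset (Fin 5), S.card = 3 → ∃ i : Fin 5,
      (∀ t, t ∈ S ↔ t - i ∈ ({-1, 0, 1} : Finset (Fin 5))) ∨
      (∀ t, t ∈ S ↔ t - i ∈ ({0, 1, 3} : Finset (Fin 5))) := by
  decide

namespace IsInducedC5

variable {v : Fin 5 → V}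

theorem adj (hC5 : IsInducedC5 G v) (i j : Fin 5) (hij : j = i + 1 ∨ i = j + 1 := by decide) :
    G.Adj (v i) (v j) :=
  (hC5.2 i j).2 hij

theorem not_adj (hC5 : IsInducedC5 G v) (i j : Fin 5)
    (hij : ¬(j = i + 1 ∨ i = j + 1) := by decide) : ¬G.Adj (v i) (v j) :=
  mt (hC5.2 i j).1 hij

theorem rotate (hC5 : IsInducedC5 G v) (k : Fin 5) : IsInducedC5 G (fun t => v (t + k)) := by
  refine ⟨fun i j hij => add_right_cancel (hC5.1 hij), fun i j => ?_⟩
  rw [hC5.2, add_right_comm i, add_right_comm j, add_left_inj, add_left_inj]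

theorem false_of_adj_iff_mem_013 (hban : _root_.Free banner G) (hC5 : IsInducedC5 G v) {x : V}
    (hx : ∀ t, G.Adj x (v t) ↔ t ∈ ({0, 1, 3} : Finset (Fin 5))) : False :=
  hban.false_of_banner ((hx 3).2 (by decide)).symm ((hx 0).2 (by decide)) (hC5.adj 0 4)
    (hC5.adj 4 3) (hC5.adj 3 2) (hC5.not_adj 3 0) (mt (hx 4).1 (by decide))
    (mt (hx 2).1 (by decide)) (hC5.not_adj 0 2) (hC5.not_adj 4 2)
    (G.ne_of_adj_of_not_adj ((hx 1).2 (by decide)) (hC5.not_adj 4 1))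

end IsInducedC5

def IsCentredAt (G : SimpleGraph V) (v : Fin 5 → V) (x : V) (i : Fin 5) : Prop :=
  ∀ t, G.Adj x (v t) ↔ t - i ∈ ({-1, 0, 1} : Finset (Fin 5))

namespace IsCentredAt

variable {v : Fin 5 → V} {x : V} {i : Fin 5}

theorem adj (hx : IsCentredAt G v x i) (t : Fin 5)
    (ht : t - i ∈ ({-1, 0, 1} : Finset (Fin 5)) := by decide) : G.Adj x (v t) :=
  (hx t).2 ht

theorem not_adj (hx : IsCentredAt G v x i) (t : Fin 5)
    (ht : t - i ∉ ({-1, 0, 1} : Finset (Fin 5)) := by decide) : ¬G.Adj x (v t) :=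
  mt (hx t).1 ht

theorem rotate (hx : IsCentredAt G v x i) (k : Fin 5) :
    IsCentredAt G (fun t => v (t + k)) x (i - k) := fun t => by
  rw [hx, sub_sub_eq_add_sub]

end IsCentredAt

theorem IsInducedC5.exists_isCentredAt {v : Fin 5 → V} (hban : _root_.Free banner G)
    (hC5 : IsInducedC5 G v) {x : V} (hx : {t | G.Adj x (v t)}.ncard = 3) :
    ∃ i, IsCentredAt G v x i := by
  classical
  rw [Set.ncard_eq_toFinset_card', Set.toFinset_ofPred] at hx
  obtain ⟨i, hi | hi⟩ := Finset.exists_sub_mem_of_card_eq_three_fin_five _ hx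
  · exact ⟨i, fun t => by simpa using hi t⟩
  · exact ((hC5.rotate i).false_of_adj_iff_mem_013 hban fun t => by simpa using hi (t + i)).elim

section Pairs

variable {v : Fin 5 → V} {x y q q' : V}

theorem adj_of_isCentredAt_zero_zero (hban : _root_.Free banner G) (hC5 : IsInducedC5 G v)
    (hx : IsCentredAt G v x 0) (hy : IsCentredAt G v y 0) (hxy : x ≠ y) : G.Adj x y := by
  by_contra hn
  exact hban.false_of_banner (hx.adj 1).symm (hx.adj 4) (hy.adj 4).symm (hy.adj 1) (hC5.adj 1 2)
    (hC5.not_adj 1 4) hn (hx.not_adj 2) (hC5.not_adj 4 2) (hy.not_adj 2) hxy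

theorem adj_of_isCentredAt_zero_one (hp6 : _root_.Free (pathGraph 6) G)
    (hban : _root_.Free banner G) (hC5 : IsInducedC5 G v)
    (hx : IsCentredAt G v x 0) (hy : IsCentredAt G v y 1)
    (hxq : G.Adj x q) (hq : ∀ t, ¬G.Adj q (v t)) : G.Adj x y := by
  by_contra hn
  by_cases hqy : G.Adj q y
  · exact hban.false_of_banner hxq hqy (hy.adj 1) (hx.adj 1).symm (hx.adj 4) hn (hq 1) (hq 4)
      (hy.not_adj 4) (hC5.not_adj 1 4) (G.ne_of_adj_of_not_adj (hC5.adj 1 2) (hq 2)).symm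
  · exact hp6.false_of_path6 hxq.symm (hx.adj 4) (hC5.adj 4 3) (hC5.adj 3 2) (hy.adj 2).symm
      (hq 4) (hq 3) (hq 2) hqy (hx.not_adj 3) (hx.not_adj 2) hn (hC5.not_adj 4 2)
      (hy.not_adj 4 ∘ Adj.symm) (hy.not_adj 3 ∘ Adj.symm)

theorem adj_of_isCentredAt_zero_two (hp6 : _root_.Free (pathGraph 6) G)
    (hban : _root_.Free banner G) (hC5 : IsInducedC5 G v)
    (hx : IsCentredAt G v x 0) (hy : IsCentredAt G v y 2)
    (hxq : G.Adj x q) (hyq' : G.Adj y q') (hq : ∀ t, ¬G.Adj q (v t))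
    (hq' : ∀ t, ¬G.Adj q' (v t)) : G.Adj x y := by
  by_contra hn
  by_cases hqy : G.Adj q y
  · exact hban.false_of_banner hxq hqy (hy.adj 1) (hx.adj 1).symm (hx.adj 4) hn (hq 1) (hq 4)
      (hy.not_adj 4) (hC5.not_adj 1 4) (G.ne_of_adj_of_not_adj (hC5.adj 1 2) (hq 2)).symm
  by_cases hq'x : G.Adj q' x
  · exact hban.false_of_banner hyq' hq'x (hx.adj 1) (hy.adj 1).symm (hy.adj 3) (hn ∘ Adj.symm)
      (hq' 1) (hq' 3) (hx.not_adj 3) (hC5.not_adj 1 3)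
      (G.ne_of_adj_of_not_adj (hC5.adj 1 2) (hq' 2)).symm
  by_cases hqq' : G.Adj q q'
  · exact hp6.false_of_path6 (hy.adj 2).symm hyq' hqq'.symm hxq.symm (hx.adj 4)
      (hq' 2 ∘ Adj.symm) (hq 2 ∘ Adj.symm) (hx.not_adj 2 ∘ Adj.symm) (hC5.not_adj 2 4)
      (hqy ∘ Adj.symm) (hn ∘ Adj.symm) (hy.not_adj 4) hq'x (hq' 4) (hq 4)
  · exact hp6.false_of_path6 hxq.symm (hx.adj 4) (hC5.adj 4 3) (hy.adj 3).symm hyq'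
      (hq 4) (hq 3) hqy hqq' (hx.not_adj 3) hn (hq'x ∘ Adj.symm) (hy.not_adj 4 ∘ Adj.symm)
      (hq' 4 ∘ Adj.symm) (hq' 3 ∘ Adj.symm)

end Pairs

theorem IsCentredAt.adj_of_isCentredAt {v : Fin 5 → V} (hp6 : _root_.Free (pathGraph 6) G)
    (hban : _root_.Free banner G) (hC5 : IsInducedC5 G v) {x y qx qy : V} {i j : Fin 5}
    (hx : IsCentredAt G v x i) (hy : IsCentredAt G v y j) (hxqx : G.Adj x qx)
    (hyqy : G.Adj y qy) (hqx : ∀ t, ¬G.Adj qx (v t)) (hqy : ∀ t, ¬G.Adj qy (v t))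
    (hxy : x ≠ y) : G.Adj x y := by
  wlog hij : j - i = 0 ∨ j - i = 1 ∨ j - i = 2 generalizing x y qx qy i j
  · refine (this hy hx hyqy hxqx hqy hqx hxy.symm (Or.inr ?_)).symm
    exact (by decide : ∀ a b : Fin 5, ¬(b - a = 0 ∨ b - a = 1 ∨ b - a = 2) →
      a - b = 1 ∨ a - b = 2) i j hij
  have hx0 : IsCentredAt G (fun t => v (t + i)) x 0 := by simpa only [sub_self] using hx.rotate i
  have hy0 := hy.rotate i
  rcases hij with h | h | h <;> rw [h] at hy0
  · exact adj_of_isCentredAt_zero_zero hban (hC5.rotate i) hx0 hy0 hxy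
  · exact adj_of_isCentredAt_zero_one hp6 hban (hC5.rotate i) hx0 hy0 hxqx (hqx <| · + i)
  · exact adj_of_isCentredAt_zero_two hp6 hban (hC5.rotate i) hx0 hy0 hxqx hyqy (hqx <| · + i)
      (hqy <| · + i)

end

theorem stmt_10_general {V : Type*} (G : SimpleGraph V)
    (hp6 : _root_.Free (SimpleGraph.pathGraph 6) G) (hban : _root_.Free banner G)
    (v : Fin 5 → V) (hC5 : IsInducedC5 G v)
    (Q : Set V) (hQ : Anticomplete5 G Q v) :
    G.IsClique
      ({x | ({j | G.Adj x (v j)} : Set (Fin 5)).ncard = 3 ∧ ∃ q ∈ Q, G.Adj x q} : Set V) := by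
  rintro x ⟨hx3, qx, hqxQ, hxqx⟩ y ⟨hy3, qy, hqyQ, hyqy⟩ hxy
  obtain ⟨i, hx⟩ := hC5.exists_isCentredAt hban hx3
  obtain ⟨j, hy⟩ := hC5.exists_isCentredAt hban hy3
  exact hx.adj_of_isCentredAt hp6 hban hC5 hy hxqx hyqy (hQ.2 qx hqxQ) (hQ.2 qy hqyQ) hxy

theorem stmt_10 {V : Type*} (G : SimpleGraph V)
    (hp6 : _root_.Free (SimpleGraph.pathGraph 6) G) (hban : _root_.Free banner G)
    (v : Fin 5 → V) (hC5 : IsInducedC5 G v)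
    (Q : Set V) (hQconn : (G.induce Q).Connected) (hQ : Anticomplete5 G Q v) :
    G.IsClique
      ({x | ({j | G.Adj x (v j)} : Set (Fin 5)).ncard = 3 ∧ ∃ q ∈ Q, G.Adj x q} : Set V) :=
  stmt_10_general G hp6 hban v hC5 Q hQ
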